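/- Let (A, S, D) be a solution of the Maxwell–Bloch equations with ω = 0 on [0,∞), and suppose r, φ, S_R, S_I, D_R : [0,∞) → ℝ are differentiable with r(t) > 0, A(t) = r(t) e^{iφ(t)}, S(t) = (S_R(t) + i S_I(t)) e^{iφ(t)} and D(t) = D_R(t) + d for all t ≥ 0. Then for all t ≥ 0: r' = −κ r + g S_R, S_R' = −γ S_R + g r (D_R + d) + g S_I²/r, S_I' = −γ S_I − g S_I S_R / r, D_R' = −2γ D_R − 4 g r S_R, and φ' = g S_I / r. -/

import Mathlib

/-!
Write `A = r e^{iφ}` and `S = σ e^{iφ}` with `σ = S_R + i S_I`. Differentiating,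
`A' = (r' + i φ' r) e^{iφ}` and `S' = (σ' + i φ' σ) e^{iφ}`, so after cancelling the common
phase the two complex equations become `r' + i φ' r = -κ r + g σ` and
`σ' + i φ' σ = -γ σ + g r D`; their real and imaginary parts give the equations for
`r`, `φ`, `S_R`, `S_I`. Since `|e^{iφ}| = 1`, `Re (conj A · S) = r S_R`, which turns the
`D`-equation into the one for `D_R`. The representations only hold on `[0, ∞)`, so derivatives
are compared within `Ici 0`, where they are still unique.
-/

open Set Complex

theorem HasDerivAt.eq_of_eqOn_Ici {E : Type*} [NormedAddCommGroup E] [NormedSpace ℝ E]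
    {f g : ℝ → E} {f' g' : E} {a t : ℝ} (hf : HasDerivAt f f' t) (hg : HasDerivAt g g' t)
    (hfg : EqOn f g (Ici a)) (ht : a ≤ t) : f' = g' :=
  (uniqueDiffOn_Ici a t ht).eq_deriv _ hf.hasDerivWithinAt
    (hg.hasDerivWithinAt.congr hfg (hfg ht))

theorem HasDerivAt.mul_cexp_I_mul {z : ℝ → ℂ} {φ : ℝ → ℝ} {z' : ℂ} {φ' t : ℝ}
    (hz : HasDerivAt z z' t) (hφ : HasDerivAt φ φ' t) :
    HasDerivAt (fun s => z s * cexp (I * (φ s : ℂ)))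
      ((z' + I * (φ' : ℂ) * z t) * cexp (I * (φ t : ℂ))) t := by
  have hphase : HasDerivAt (fun s => cexp (I * (φ s : ℂ)))
      (cexp (I * (φ t : ℂ)) * (I * (φ' : ℂ))) t :=
    (hφ.ofReal_comp.const_mul I).cexp
  exact (hz.mul hphase).congr_deriv (by ring)

theorem add_I_mul_eq_of_hasDerivAt_mul_cexp_I_mul {F z : ℝ → ℂ} {φ : ℝ → ℝ} {z' L : ℂ}
    {φ' a t : ℝ} (hF : HasDerivAt F (L * cexp (I * (φ t : ℂ))) t) (hz : HasDerivAt z z' t)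
    (hφ : HasDerivAt φ φ' t) (hFz : EqOn F (fun s => z s * cexp (I * (φ s : ℂ))) (Ici a))
    (ht : a ≤ t) : z' + I * (φ' : ℂ) * z t = L :=
  mul_right_cancel₀ (exp_ne_zero _) (hF.eq_of_eqOn_Ici (hz.mul_cexp_I_mul hφ) hFz ht).symm

theorem re_conj_ofReal_mul_cexp_mul_mul_cexp (r θ : ℝ) (σ : ℂ) :
    (starRingEnd ℂ (r * cexp (I * (θ : ℂ))) * (σ * cexp (I * (θ : ℂ)))).re =
      r * σ.re := by
  have hunit : starRingEnd ℂ (cexp (I * (θ : ℂ))) * cexp (I * (θ : ℂ)) = 1 := by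
    rw [← exp_conj, ← exp_add]
    simp
  calc (starRingEnd ℂ (r * cexp (I * (θ : ℂ))) * (σ * cexp (I * (θ : ℂ)))).re
      = (r * σ * (starRingEnd ℂ (cexp (I * (θ : ℂ))) * cexp (I * (θ : ℂ)))).re := by
        rw [map_mul, conj_ofReal]; congr 1; ring
    _ = r * σ.re := by simp [hunit]

theorem maxwell_bloch_polar_coordinates
    (g κ γ d : ℝ)
    (A S : ℝ → ℂ) (D : ℝ → ℝ)
    (hA : ∀ t ≥ (0 : ℝ), HasDerivAt A (-(κ : ℂ) * A t + (g : ℂ) * S t) t)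
    (hS : ∀ t ≥ (0 : ℝ), HasDerivAt S (-(γ : ℂ) * S t + (g : ℂ) * A t * (D t : ℂ)) t)
    (hD : ∀ t ≥ (0 : ℝ),
      HasDerivAt D (-4 * g * ((starRingEnd ℂ) (A t) * S t).re - 2 * γ * (D t - d)) t)
    (r φ SR SI DR r' φ' SR' SI' DR' : ℝ → ℝ)
    (hr : ∀ t ≥ (0 : ℝ), HasDerivAt r (r' t) t)
    (hφ : ∀ t ≥ (0 : ℝ), HasDerivAt φ (φ' t) t)
    (hSR : ∀ t ≥ (0 : ℝ), HasDerivAt SR (SR' t) t)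
    (hSI : ∀ t ≥ (0 : ℝ), HasDerivAt SI (SI' t) t)
    (hDR : ∀ t ≥ (0 : ℝ), HasDerivAt DR (DR' t) t)
    (hrpos : ∀ t ≥ (0 : ℝ), 0 < r t)
    (hAeq : ∀ t ≥ (0 : ℝ), A t = (r t : ℂ) * Complex.exp (Complex.I * (φ t : ℂ)))
    (hSeq : ∀ t ≥ (0 : ℝ),
      S t = ((SR t : ℂ) + Complex.I * (SI t : ℂ)) * Complex.exp (Complex.I * (φ t : ℂ)))
    (hDeq : ∀ t ≥ (0 : ℝ), D t = DR t + d) :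
    ∀ t ≥ (0 : ℝ),
      r' t = -κ * r t + g * SR t ∧
      SR' t = -γ * SR t + g * r t * (DR t + d) + g * SI t ^ 2 / r t ∧
      SI' t = -γ * SI t - g * SI t * SR t / r t ∧
      DR' t = -2 * γ * DR t - 4 * g * r t * SR t ∧
      φ' t = g * SI t / r t := by
  intro t ht
  have hσ : HasDerivAt (fun s => (SR s : ℂ) + I * SI s) (SR' t + I * SI' t) t :=
    (hSR t ht).ofReal_comp.add ((hSI t ht).ofReal_comp.const_mul I)
  have hAframe := add_I_mul_eq_of_hasDerivAt_mul_cexp_I_mul (L := -κ * r t + g * (SR t + I * SI t))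
    ((hA t ht).congr_deriv (by rw [hAeq t ht, hSeq t ht]; ring))
    (hr t ht).ofReal_comp (hφ t ht) hAeq ht
  have hSframe := add_I_mul_eq_of_hasDerivAt_mul_cexp_I_mul
    (L := -γ * (SR t + I * SI t) + g * r t * D t)
    ((hS t ht).congr_deriv (by rw [hAeq t ht, hSeq t ht]; ring)) hσ (hφ t ht) hSeq ht
  have hDR_eq := ((hDR t ht).add_const d).eq_of_eqOn_Ici (hD t ht)
    (fun s hs => (hDeq s hs).symm) ht
  rw [hAeq t ht, hSeq t ht, re_conj_ofReal_mul_cexp_mul_mul_cexp, hDeq t ht] at hDR_eq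
  simp only [Complex.ext_iff, add_re, add_im, mul_re, mul_im, I_re, I_im, ofReal_re, ofReal_im,
    neg_re, neg_im, mul_zero, zero_mul, one_mul, sub_zero, zero_sub, add_zero, zero_add,
    neg_zero] at hAframe hSframe hDR_eq
  rw [hDeq t ht] at hSframe
  obtain ⟨hr', hφr⟩ := hAframe
  obtain ⟨hSR', hSI'⟩ := hSframe
  have hφ' : φ' t = g * SI t / r t := by
    rw [eq_div_iff (hrpos t ht).ne']
    exact hφr
  refine ⟨hr', ?_, ?_, by rw [hDR_eq]; ring, hφ'⟩
  · rw [show g * SI t ^ 2 / r t = φ' t * SI t by rw [hφ']; ring]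
    linarith
  · rw [show g * SI t * SR t / r t = φ' t * SR t by rw [hφ']; ring]
    linarith
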